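/- Let β > 1 be a Parry number, k ≥ 1, and s a binary U_β-automatic sequence. Then there exists a constant c > 0 (depending on β, k, and the size of the generating automaton) such that C_{2k}(s, N) ≥ c·N for all sufficiently large N. -/

import Mathlib

/-!
For `n < U m` and `c` large, the normal representation of `n + U (c + m)` is `1 0^b rep n`
with `b = c + m - |rep n|`: this word is admissible, and admissible words with nonzero leading
digit are determined by their value. The state the automaton reaches after reading `1 0^b` is
eventually periodic in `b`, with some period `P`. Taking the `2k` shifts
`D i = U (A + (i + 1) P + m)`, the values `s (n + D i)` therefore all coincide for `n < U m`, the
exponent of `-1` in the correlation sum is even, and the sum equals `U m`. Finally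
`β ^ m ≤ U m ≤ β ^ m / σ`, where `σ > 0` bounds the tails of the (ultimately periodic) expansion
of `1` from below, so the window `U m + U (m + A + 2kP)` is a bounded multiple of `U m`.
-/

/-- The correlation sum `V(s, M, D)` of a sequence `s`. -/
def corrV (s : ℕ → ℕ) (M : ℕ) {k : ℕ} (D : Fin k → ℕ) : ℤ :=
  ∑ n ∈ Finset.range M, (-1 : ℤ) ^ (∑ i, s (n + D i))

/-- The `N`th correlation measure of order `k` of the sequence `s`. -/
noncomputable def corrMeasure (s : ℕ → ℕ) (k N : ℕ) : ℕ :=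
  sSup {c : ℕ | ∃ M : ℕ, ∃ D : Fin k → ℕ, 0 < M ∧ StrictMono D ∧
    (∀ i, M + D i ≤ N) ∧ c = (corrV s M D).natAbs}

/-- Value of a digit word (most significant digit first) in the numeration system `U`. -/
def wval (U : ℕ → ℕ) : List ℕ → ℕ
  | [] => 0
  | c :: w => c * U w.length + wval U w

/-- Lexicographic order on infinite sequences of digits. -/
def LexLe (x y : ℕ → ℕ) : Prop :=
  x = y ∨ ∃ j : ℕ, (∀ i < j, x i = y i) ∧ x j < y j

/-- The infinite sequence obtained from a finite word by padding with zeroes. -/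
def padSeq (w : List ℕ) : ℕ → ℕ := fun j => w.getD j 0

/-- Parry admissibility: a word `w` belongs to `0*L_β` iff every suffix of `w`,
padded with zeroes, is lexicographically at most the quasi-greedy expansion `t`. -/
def Adm (t : ℕ → ℕ) (w : List ℕ) : Prop :=
  ∀ i : ℕ, LexLe (padSeq (w.drop i)) t

open Finset Function

lemma wval_eq_sum (U : ℕ → ℕ) (w : List ℕ) :
    wval U w = ∑ i ∈ range w.length, w.getD i 0 * U (w.length - 1 - i) := by
  induction w with
  | nil => simp [wval]
  | cons c w ih =>
      rw [wval, ih, List.length_cons, sum_range_succ', add_comm]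
      simp only [List.getD_cons_succ, List.getD_cons_zero, Nat.add_sub_cancel, Nat.sub_zero]
      congr 1
      refine sum_congr rfl fun i _ => ?_
      congr 2
      omega

lemma wval_replicate_zero_append (U : ℕ → ℕ) (b : ℕ) (w : List ℕ) :
    wval U (List.replicate b 0 ++ w) = wval U w := by
  induction b with
  | zero => simp
  | succ b ih => simpa [List.replicate_succ, wval] using ih

lemma foldl_replicate {α β : Type*} (f : α → β → α) (b : ℕ) (x : β) (r : α) :
    List.foldl f r (List.replicate b x) = (f · x)^[b] r := by
  induction b generalizing r with
  | zero => rfl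
  | succ b ih => rw [List.replicate_succ, List.foldl_cons, ih, iterate_succ_apply]

lemma wval_lt_wval_of_lt_at (U : ℕ → ℕ) {u v : List ℕ} {j : ℕ} (hlen : u.length = v.length)
    (hj : j < u.length) (hpre : ∀ i < j, u.getD i 0 = v.getD i 0)
    (hlt : u.getD j 0 < v.getD j 0) (htail : wval U (u.drop (j + 1)) < U (u.length - (j + 1))) :
    wval U u < wval U v := by
  induction u generalizing v j with
  | nil => simp at hj
  | cons c u ih =>
    obtain _ | ⟨d, v⟩ := v
    · simp at hlen
    simp only [List.length_cons, Nat.add_right_cancel_iff] at hlen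
    rw [wval, wval, ← hlen]
    cases j with
    | zero =>
      simp only [List.getD_cons_zero] at hlt
      simp only [List.drop_succ_cons, List.drop_zero, List.length_cons, Nat.add_sub_cancel] at htail
      have : (c + 1) * U u.length ≤ d * U u.length := Nat.mul_le_mul_right _ hlt
      nlinarith
    | succ j =>
      obtain rfl : c = d := by simpa using hpre 0 (by omega)
      have := ih hlen (by simpa using hj) (fun i hi => by simpa using hpre (i + 1) (by omega))
        (by simpa using hlt) (by simpa using htail)
      omega

lemma lexLe_of_le_of_lt {x y : ℕ → ℕ} {j : ℕ} (hle : ∀ i < j, x i ≤ y i) (hlt : x j < y j) :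
    LexLe x y := by
  classical
  have hex : ∃ i, x i ≠ y i := ⟨j, hlt.ne⟩
  have hfind : Nat.find hex ≤ j := Nat.find_min' hex hlt.ne
  refine Or.inr ⟨Nat.find hex, fun i hi => not_not.mp (Nat.find_min hex hi), ?_⟩
  rcases hfind.lt_or_eq with h | h
  · exact (hle _ h).lt_of_ne (Nat.find_spec hex)
  · exact h ▸ hlt

lemma eq_and_eq_of_mul_add_eq_mul_add {q c₁ c₂ x₁ x₂ : ℕ} (h₁ : x₁ < q) (h₂ : x₂ < q)
    (h : c₁ * q + x₁ = c₂ * q + x₂) : c₁ = c₂ ∧ x₁ = x₂ := by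
  have e₁ := (Nat.div_mod_unique (a := c₁ * q + x₁) (d := c₁) (c := x₁) (by omega)).2 ⟨by ring, h₁⟩
  have e₂ := (Nat.div_mod_unique (a := c₂ * q + x₂) (d := c₂) (c := x₂) (by omega)).2 ⟨by ring, h₂⟩
  rw [h] at e₁
  exact ⟨e₁.1.symm.trans e₂.1, e₁.2.symm.trans e₂.2⟩

section Admissible

variable {t : ℕ → ℕ} {w : List ℕ}

lemma Adm.drop (h : Adm t w) (i : ℕ) : Adm t (w.drop i) := by
  intro j
  rw [List.drop_drop]
  exact h _

lemma Adm.replicate_zero_append (ht0 : 0 < t 0) (b : ℕ) (h : Adm t w) :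
    Adm t (List.replicate b 0 ++ w) := by
  induction b with
  | zero => simpa using h
  | succ b ih =>
    rintro (_ | i)
    · exact lexLe_of_le_of_lt (j := 0) (by simp) (by simpa [padSeq, List.replicate_succ] using ht0)
    · simpa [List.replicate_succ] using ih i

lemma Adm.one_cons_replicate_zero_append (ht0 : 0 < t 0) {j b : ℕ} (hj : t (j + 1) ≠ 0)
    (hjb : j < b) (h : Adm t w) : Adm t (1 :: (List.replicate b 0 ++ w)) := by
  have hzero : ∀ i < b, padSeq (1 :: (List.replicate b 0 ++ w)) (i + 1) = 0 := fun i hi => by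
    simp only [padSeq, List.getD_cons_succ]
    rw [List.getD_append _ _ _ _ (by simpa using hi), List.getD_replicate 0 hi]
  rintro (_ | i)
  · refine lexLe_of_le_of_lt (j := j + 1) (fun i hi => ?_) (by simpa [hzero j hjb] using hj.bot_lt)
    rcases i with _ | i
    · simp only [padSeq, List.drop_zero, List.getD_cons_zero]
      omega
    · simp [hzero i (by omega)]
  · simpa using (h.replicate_zero_append ht0 b) i

end Admissible

structure IsParryBertrand (t U : ℕ → ℕ) : Prop where
  zero : U 0 = 1
  succ : ∀ n, U (n + 1) = 1 + ∑ i ∈ range (n + 1), t i * U (n - i)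

structure IsNormalRep (t U : ℕ → ℕ) (rep : ℕ → List ℕ) : Prop where
  wval_eq : ∀ n, wval U (rep n) = n
  adm : ∀ n, Adm t (rep n)
  lead_ne_zero : ∀ n c w, rep n = c :: w → c ≠ 0

namespace IsParryBertrand

variable {t U : ℕ → ℕ}

lemma pos (hU : IsParryBertrand t U) (n : ℕ) : 0 < U n := by
  cases n with
  | zero => simp [hU.zero]
  | succ n => rw [hU.succ]; omega

lemma strictMono (hU : IsParryBertrand t U) (ht0 : 0 < t 0) : StrictMono U := by
  refine strictMono_nat_of_lt_succ fun n => ?_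
  have h : t 0 * U n ≤ ∑ i ∈ range (n + 1), t i * U (n - i) :=
    single_le_sum (f := fun i => t i * U (n - i)) (fun _ _ => Nat.zero_le _) (by simp)
  rw [hU.succ]
  nlinarith

lemma wval_add_one (hU : IsParryBertrand t U) {w : List ℕ}
    (hw : ∀ i < w.length, w.getD i 0 = t i) : wval U w + 1 = U w.length := by
  rw [wval_eq_sum]
  cases h : w.length with
  | zero => simp [hU.zero]
  | succ n =>
    rw [hU.succ, add_comm]
    congr 1
    refine sum_congr rfl fun i hi => ?_
    rw [hw i (by simp at hi; omega), Nat.add_sub_cancel]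

theorem wval_lt_of_adm (hU : IsParryBertrand t U) (hne : ∀ n, ∃ j, t (n + j) ≠ 0)
    {w : List ℕ} (hw : Adm t w) : wval U w < U w.length := by
  induction hlen : w.length using Nat.strong_induction_on generalizing w with
  | _ n ih =>
  subst hlen
  obtain heq | ⟨j, hpre, hlt⟩ := hw 0
  · obtain ⟨j, hj⟩ := hne w.length
    refine absurd ?_ hj
    rw [← congrFun heq (w.length + j)]
    simp [padSeq]
  simp only [List.drop_zero, padSeq] at hpre hlt
  rcases lt_or_ge j w.length with hj | hj
  -- compare `w` with the prefix `v` of `t` of the same length, whose value is `U |w| - 1`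
  · obtain ⟨v, hvlen, hv⟩ : ∃ v : List ℕ, v.length = w.length ∧ ∀ i < v.length, v.getD i 0 = t i :=
      ⟨(List.range w.length).map t, by simp, fun i hi => by simp_all⟩
    calc wval U w < wval U v :=
          wval_lt_wval_of_lt_at U hvlen.symm hj
            (fun i hi => (hpre i hi).trans (hv i (by omega)).symm)
            (hlt.trans_eq (hv j (by omega)).symm)
            (by simpa using ih _ (by simp; omega) (hw.drop (j + 1)) rfl)
      _ < U w.length := by have := hU.wval_add_one hv; rw [hvlen] at this; omega
  · have := hU.wval_add_one (w := w) fun i hi => hpre i (by omega)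
    omega

theorem eq_of_adm_of_length_eq (hU : IsParryBertrand t U) (hne : ∀ n, ∃ j, t (n + j) ≠ 0)
    {w₁ w₂ : List ℕ} (h₁ : Adm t w₁) (h₂ : Adm t w₂) (hlen : w₁.length = w₂.length)
    (hval : wval U w₁ = wval U w₂) : w₁ = w₂ := by
  induction w₁ generalizing w₂ with
  | nil => exact (List.eq_nil_of_length_eq_zero hlen.symm).symm
  | cons c₁ u₁ ih =>
    obtain _ | ⟨c₂, u₂⟩ := w₂
    · simp at hlen
    simp only [List.length_cons, Nat.add_right_cancel_iff] at hlen
    rw [wval, wval, hlen] at hval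
    obtain ⟨rfl, hu⟩ := eq_and_eq_of_mul_add_eq_mul_add (hlen ▸ hU.wval_lt_of_adm hne (h₁.drop 1))
      (hU.wval_lt_of_adm hne (h₂.drop 1) : wval U u₂ < _) hval
    exact congrArg (c₁ :: ·) (ih (h₁.drop 1) (h₂.drop 1) hlen hu)

lemma length_le_of_wval_lt (hU : IsParryBertrand t U) (ht0 : 0 < t 0) {w : List ℕ}
    (hlead : ∀ c u, w = c :: u → c ≠ 0) {m : ℕ} (h : wval U w < U m) : w.length ≤ m := by
  obtain _ | ⟨c, u⟩ := w
  · simp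
  have hc := Nat.pos_of_ne_zero (hlead c u rfl)
  by_contra! hm
  have : U m ≤ U u.length := (hU.strictMono ht0).monotone (by simp at hm; omega)
  rw [wval] at h
  nlinarith

theorem eq_of_wval_eq (hU : IsParryBertrand t U) (ht0 : 0 < t 0)
    (hne : ∀ n, ∃ j, t (n + j) ≠ 0) {w₁ w₂ : List ℕ} (h₁ : Adm t w₁) (h₂ : Adm t w₂)
    (hl₁ : ∀ c u, w₁ = c :: u → c ≠ 0) (hl₂ : ∀ c u, w₂ = c :: u → c ≠ 0)
    (hval : wval U w₁ = wval U w₂) : w₁ = w₂ := by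
  have hlen : w₁.length = w₂.length := le_antisymm
    (hU.length_le_of_wval_lt ht0 hl₁ (hval ▸ hU.wval_lt_of_adm hne h₂))
    (hU.length_le_of_wval_lt ht0 hl₂ (hval ▸ hU.wval_lt_of_adm hne h₁))
  exact hU.eq_of_adm_of_length_eq hne h₁ h₂ hlen hval

theorem rep_add_U (hU : IsParryBertrand t U) (ht0 : 0 < t 0) (hne : ∀ n, ∃ j, t (n + j) ≠ 0)
    {rep : ℕ → List ℕ} (hrep : IsNormalRep t U rep) {j c m n : ℕ} (hj : t (j + 1) ≠ 0)
    (hjc : j < c) (hn : n < U m) :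
    rep (n + U (c + m)) = 1 :: (List.replicate (c + m - (rep n).length) 0 ++ rep n) := by
  have hl : (rep n).length ≤ m :=
    hU.length_le_of_wval_lt ht0 (hrep.lead_ne_zero n) (by rwa [hrep.wval_eq])
  refine hU.eq_of_wval_eq ht0 hne (hrep.adm _)
    ((hrep.adm n).one_cons_replicate_zero_append ht0 hj (by omega)) (hrep.lead_ne_zero _)
    (by simp) ?_
  rw [hrep.wval_eq, wval, wval_replicate_zero_append, hrep.wval_eq]
  rw [List.length_append, List.length_replicate, Nat.sub_add_cancel (by omega), one_mul, add_comm]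

end IsParryBertrand

lemma le_of_renewal {t : ℕ → ℕ} {a b x y : ℕ → ℝ} (h0 : a 0 ≤ b 0) (hxy : ∀ n, x n ≤ y n)
    (ha : ∀ n, a (n + 1) = x (n + 1) + ∑ i ∈ range (n + 1), t i * a (n - i))
    (hb : ∀ n, b (n + 1) = y (n + 1) + ∑ i ∈ range (n + 1), t i * b (n - i)) (n : ℕ) :
    a n ≤ b n := by
  induction n using Nat.strong_induction_on with
  | _ n ih =>
  rcases n with _ | n
  · exact h0
  rw [ha, hb]
  gcongr with i hi
  · exact hxy _
  · exact ih _ (by omega)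

noncomputable def betaTail (β : ℝ) (t : ℕ → ℕ) (m : ℕ) : ℝ :=
  ∑' j : ℕ, (t (m + j) : ℝ) * β⁻¹ ^ (j + 1)

section BetaExpansion

variable {β : ℝ} {t : ℕ → ℕ}

lemma pow_succ_eq_betaTail_add_sum (hβ : 1 < β) (hdig : ∀ j, (t j : ℝ) < β)
    (hsum : ∑' j : ℕ, (t j : ℝ) * β⁻¹ ^ (j + 1) = 1) (n : ℕ) :
    β ^ (n + 1) = betaTail β t (n + 1) + ∑ i ∈ range (n + 1), t i * β ^ (n - i) := by
  have hβ0 : 0 < β := by linarith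
  have hsummable : Summable fun j : ℕ => (t j : ℝ) * β⁻¹ ^ (j + 1) := by
    refine .of_nonneg_of_le (fun j => by positivity) (fun j => ?_)
      (summable_geometric_of_lt_one (by positivity) (inv_lt_one_of_one_lt₀ hβ))
    calc (t j : ℝ) * β⁻¹ ^ (j + 1) ≤ β * β⁻¹ ^ (j + 1) := by gcongr; exact (hdig j).le
      _ = β⁻¹ ^ j := by rw [pow_succ', ← mul_assoc, mul_inv_cancel₀ hβ0.ne', one_mul]
  have hsplit := hsummable.sum_add_tsum_nat_add (n + 1)
  rw [hsum] at hsplit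
  calc β ^ (n + 1) = β ^ (n + 1) * 1 := (mul_one _).symm
    _ = _ := by
      rw [← hsplit, mul_add, add_comm, betaTail, mul_sum, ← tsum_mul_left]
      congr 1
      · refine tsum_congr fun j => ?_
        rw [add_comm (n + 1) j, show j + (n + 1) + 1 = j + 1 + (n + 1) by ring,
          pow_add β⁻¹ (j + 1)]
        simp only [inv_pow]
        field_simp
      · refine sum_congr rfl fun i hi => ?_
        have : n + 1 = (n - i) + (i + 1) := by simp at hi; omega
        rw [this, pow_add, inv_pow]
        field_simp

lemma pow_le_U (hβ : 1 < β) (hdig : ∀ j, (t j : ℝ) < β)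
    (hsum : ∑' j : ℕ, (t j : ℝ) * β⁻¹ ^ (j + 1) = 1) (htail_le : ∀ m, betaTail β t m ≤ 1)
    {U : ℕ → ℕ} (hU : IsParryBertrand t U) (n : ℕ) : β ^ n ≤ U n :=
  le_of_renewal (t := t) (b := fun n => (U n : ℝ)) (y := fun _ => 1) (by simp [hU.zero]) htail_le
    (pow_succ_eq_betaTail_add_sum hβ hdig hsum) (fun n => by simp only [hU.succ]; push_cast; rfl) n

lemma mul_U_le_pow (hβ : 1 < β) (hdig : ∀ j, (t j : ℝ) < β)
    (hsum : ∑' j : ℕ, (t j : ℝ) * β⁻¹ ^ (j + 1) = 1) {σ : ℝ} (hσ1 : σ ≤ 1)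
    (hσ : ∀ m, σ ≤ betaTail β t m) {U : ℕ → ℕ} (hU : IsParryBertrand t U) (n : ℕ) :
    σ * U n ≤ β ^ n :=
  le_of_renewal (t := t) (a := fun n => σ * U n) (x := fun _ => σ) (by simpa [hU.zero]) hσ
    (fun n => by
      simp only [hU.succ]; push_cast; rw [mul_add, mul_one, mul_sum]; simp only [mul_left_comm])
    (pow_succ_eq_betaTail_add_sum hβ hdig hsum) n

lemma t_zero_pos (hβ : 1 < β) (hdig : ∀ j, (t j : ℝ) < β)
    (hsum : ∑' j : ℕ, (t j : ℝ) * β⁻¹ ^ (j + 1) = 1) (h1 : betaTail β t 1 ≤ 1) : 0 < t 0 := by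
  have := pow_succ_eq_betaTail_add_sum hβ hdig hsum 0
  simp only [zero_add, pow_one, range_one, sum_singleton, Nat.sub_self, pow_zero, mul_one] at this
  exact_mod_cast (show (0 : ℝ) < t 0 by linarith)

lemma exists_ne_zero_of_betaTail_pos {n : ℕ} (h : 0 < betaTail β t n) : ∃ j, t (n + j) ≠ 0 := by
  by_contra! h'
  simp [betaTail, h'] at h

end BetaExpansion

lemma exists_pos_forall_le_of_eventually_periodic {g : ℕ → ℝ} {m p : ℕ} (hp : 0 < p)
    (hper : ∀ n ≥ m, g (n + p) = g n) (hpos : ∀ n, 0 < g n) : ∃ σ > 0, ∀ n, σ ≤ g n := by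
  obtain ⟨n₀, -, hmin⟩ := exists_min_image (range (m + p)) g ⟨0, by simp; omega⟩
  refine ⟨g n₀, hpos n₀, fun n => ?_⟩
  obtain ⟨n', hn', hgn⟩ : ∃ n' < m + p, g n = g n' := by
    rcases lt_or_ge n m with h | h
    · exact ⟨n, by omega, rfl⟩
    have hperiodic : Periodic (fun j => g (m + j)) p := fun j => by
      simpa [add_assoc] using hper (m + j) (by omega)
    refine ⟨m + (n - m) % p, by have := Nat.mod_lt (n - m) hp; omega, ?_⟩
    rw [hperiodic.map_mod_nat, Nat.add_sub_cancel' h]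
  exact hgn ▸ hmin n' (by simpa using hn')

lemma betaTail_add_period {β : ℝ} {t : ℕ → ℕ} {m p : ℕ} (hper : ∀ j ≥ m, t (j + p) = t j)
    {n : ℕ} (hn : m ≤ n) : betaTail β t (n + p) = betaTail β t n :=
  tsum_congr fun j => by rw [show n + p + j = n + j + p by ring, hper _ (by omega)]

lemma natAbs_corrV_le (s : ℕ → ℕ) (M : ℕ) {k : ℕ} (D : Fin k → ℕ) : (corrV s M D).natAbs ≤ M :=
  (Int.natAbs_sum_le _ _).trans (by simp)

lemma natAbs_corrV_le_corrMeasure {s : ℕ → ℕ} {k M N : ℕ} (hk : 0 < k) {D : Fin k → ℕ} (hM : 0 < M)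
    (hD : StrictMono D) (hN : ∀ i, M + D i ≤ N) : (corrV s M D).natAbs ≤ corrMeasure s k N := by
  refine le_csSup ⟨N, ?_⟩ ⟨M, D, hM, hD, hN, rfl⟩
  rintro _ ⟨M', D', -, -, hN', rfl⟩
  have := hN' ⟨0, hk⟩
  have := natAbs_corrV_le s M' D'
  omega

lemma corrV_eq_of_forall_eq {s : ℕ → ℕ} {M k : ℕ} {D : Fin (2 * k) → ℕ} (e : ℕ → ℕ)
    (h : ∀ n < M, ∀ i, s (n + D i) = e n) : corrV s M D = M := by
  calc corrV s M D = ∑ _n ∈ range M, (1 : ℤ) := sum_congr rfl fun n hn => by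
        rw [sum_congr rfl fun i _ => h n (mem_range.mp hn) i, sum_const, card_univ,
          Fintype.card_fin, smul_eq_mul, mul_assoc, pow_mul]
        simp
    _ = M := by simp

lemma exists_linear_lower_bound {F G h : ℕ → ℕ} {C : ℝ} (hC : 0 < C) (hG : StrictMono G)
    (hGF : ∀ m, (G (m + 1) : ℝ) ≤ C * F m) (hFh : ∀ m N, G m ≤ N → F m ≤ h N) :
    ∃ c : ℝ, 0 < c ∧ ∃ N₀ : ℕ, ∀ N ≥ N₀, c * N ≤ h N := by
  classical
  refine ⟨C⁻¹, inv_pos.mpr hC, G 0, fun N hN => ?_⟩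
  have hex : ∃ m, N < G (m + 1) := ⟨N, (hG.id_le (N + 1)).trans_lt' (by simp)⟩
  obtain ⟨m, hNm, hGm⟩ : ∃ m, N < G (m + 1) ∧ G m ≤ N := by
    refine ⟨Nat.find hex, Nat.find_spec hex, ?_⟩
    rcases h : Nat.find hex with _ | m
    · exact hN
    · exact not_lt.mp (Nat.find_min hex (h ▸ m.lt_succ_self))
  rw [inv_mul_le_iff₀ hC]
  calc (N : ℝ) ≤ G (m + 1) := by exact_mod_cast hNm.le
    _ ≤ C * F m := hGF m
    _ ≤ C * h N := by gcongr; exact_mod_cast hFh m N hGm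

lemma exists_iterate_add_mul_eq {α : Type*} [Finite α] (f : α → α) (x : α) :
    ∃ a P, 0 < P ∧ ∀ b ≥ a, ∀ q, f^[b + q * P] x = f^[b] x := by
  obtain ⟨m, n, hmn, heq⟩ := Finite.exists_ne_map_eq_of_infinite (f^[·] x)
  wlog hlt : m < n generalizing m n
  · exact this n m hmn.symm heq.symm (by omega)
  have hper : IsPeriodicPt f (n - m) (f^[m] x) := by
    rw [IsPeriodicPt, IsFixedPt, ← iterate_add_apply, Nat.sub_add_cancel hlt.le, heq]
  refine ⟨m, n - m, by omega, fun b hb q => ?_⟩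
  have := ((hper.apply_iterate (b - m)).mul_const q).eq
  rwa [← iterate_add_apply, ← iterate_add_apply, ← iterate_add_apply, Nat.sub_add_cancel hb,
    show (n - m) * q + (b - m) + m = b + q * (n - m) by rw [mul_comm]; omega] at this

theorem U_le_corrMeasure {t U : ℕ → ℕ} (hU : IsParryBertrand t U) (ht0 : 0 < t 0)
    (hne : ∀ n, ∃ j, t (n + j) ≠ 0) {rep : ℕ → List ℕ} (hrep : IsNormalRep t U rep)
    {R : Type*} {δ : R → ℕ → R} {r0 : R} {τ : R → ℕ} {s : ℕ → ℕ}
    (hs : ∀ n, s n = τ (List.foldl δ r0 (rep n))) {j A P : ℕ} (hj : t (j + 1) ≠ 0) (hjA : j < A)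
    (hP : 0 < P) (hA : ∀ b ≥ A, ∀ q, (δ · 0)^[b + q * P] (δ r0 1) = (δ · 0)^[b] (δ r0 1))
    {k : ℕ} (hk : 0 < k) {m N : ℕ} (hN : U m + U (A + 2 * k * P + m) ≤ N) :
    U m ≤ corrMeasure s (2 * k) N := by
  set D : Fin (2 * k) → ℕ := fun i => U (A + (i + 1) * P + m)
  have hmono := hU.strictMono ht0
  have hD : StrictMono D := fun i i' h => hmono (by have : (i : ℕ) < i' := h; nlinarith)
  have hDN (i : Fin (2 * k)) : U m + D i ≤ N := by
    change U m + U (A + (i + 1) * P + m) ≤ N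
    have : (i + 1 : ℕ) * P ≤ 2 * k * P := Nat.mul_le_mul_right _ i.2
    have := hmono.monotone (show A + (i + 1) * P + m ≤ A + 2 * k * P + m by omega)
    omega
  have hconst : ∀ n < U m, ∀ i, s (n + D i) =
      τ (List.foldl δ ((δ · 0)^[A + m - (rep n).length] (δ r0 1)) (rep n)) := by
    intro n hn i
    have hl : (rep n).length ≤ m :=
      hU.length_le_of_wval_lt ht0 (hrep.lead_ne_zero n) (by rwa [hrep.wval_eq])
    rw [hs, hU.rep_add_U ht0 hne hrep hj (by omega : j < A + (i + 1) * P) hn, List.foldl_cons,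
      List.foldl_append, foldl_replicate,
      show A + (i + 1) * P + m - (rep n).length = A + m - (rep n).length + (i + 1) * P by omega,
      hA _ (by omega)]
  calc U m = (corrV s (U m) D).natAbs := by rw [corrV_eq_of_forall_eq _ hconst]; rfl
    _ ≤ _ := natAbs_corrV_le_corrMeasure (by omega) (hU.pos m) hD hDN

theorem stmt17_general (β : ℝ) (hβ : 1 < β) (t : ℕ → ℕ)
    (hdig : ∀ j, (t j : ℝ) < β)
    (hsum : ∑' j : ℕ, (t j : ℝ) * β⁻¹ ^ (j + 1) = 1)
    (htail_pos : ∀ m : ℕ, 0 < ∑' j : ℕ, (t (m + j) : ℝ) * β⁻¹ ^ (j + 1))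
    (htail_le : ∀ m : ℕ, ∑' j : ℕ, (t (m + j) : ℝ) * β⁻¹ ^ (j + 1) ≤ 1)
    (hParry : ∃ m p : ℕ, 0 < p ∧ ∀ j ≥ m, t (j + p) = t j)
    (U : ℕ → ℕ) (hU0 : U 0 = 1)
    (hUrec : ∀ n, U (n + 1) = 1 + ∑ i ∈ Finset.range (n + 1), t i * U (n - i))
    (repU : ℕ → List ℕ)
    (hrep_val : ∀ n, wval U (repU n) = n)
    (hrep_adm : ∀ n, Adm t (repU n))
    (hrep_lead : ∀ n c w, repU n = c :: w → c ≠ 0)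
    {R : Type*} [Fintype R] (δ : R → ℕ → R) (r0 : R) (τ : R → ℕ)
    (s : ℕ → ℕ) (hs : ∀ n, s n = τ (List.foldl δ r0 (repU n)))
    (k : ℕ) (hk : 1 ≤ k) :
    ∃ c : ℝ, 0 < c ∧ ∃ N₀ : ℕ, ∀ N ≥ N₀, c * N ≤ (corrMeasure s (2 * k) N : ℝ) := by
  obtain ⟨m₀, p, hp, hper⟩ := hParry
  have hU : IsParryBertrand t U := ⟨hU0, hUrec⟩
  have ht0 : 0 < t 0 := t_zero_pos hβ hdig hsum (htail_le 1)
  have hne (n : ℕ) : ∃ j, t (n + j) ≠ 0 := exists_ne_zero_of_betaTail_pos (htail_pos n)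
  obtain ⟨σ, hσ, hσle⟩ := exists_pos_forall_le_of_eventually_periodic hp
    (fun n hn => betaTail_add_period hper hn) htail_pos
  have hgrowth (m n : ℕ) : σ * U (n + m) ≤ β ^ n * U m := calc
    σ * U (n + m) ≤ β ^ (n + m) :=
      mul_U_le_pow hβ hdig hsum ((hσle 0).trans (htail_le 0)) hσle hU _
    _ = β ^ n * β ^ m := pow_add _ _ _
    _ ≤ β ^ n * U m := by gcongr; exact pow_le_U hβ hdig hsum htail_le hU m
  obtain ⟨j, hj⟩ := hne 1
  obtain ⟨a, P, hP, hA⟩ := exists_iterate_add_mul_eq (δ · 0) (δ r0 1)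
  set L := a + j + 1 + 2 * k * P
  refine exists_linear_lower_bound (G := fun m => U m + U (L + m)) (C := (β + β ^ (L + 1)) / σ)
    (by positivity) (fun m m' h => add_lt_add (hU.strictMono ht0 h) (hU.strictMono ht0 (by omega)))
    (fun m => ?_) (fun m N hN => U_le_corrMeasure hU ht0 hne ⟨hrep_val, hrep_adm, hrep_lead⟩ hs
      (add_comm 1 j ▸ hj) (by omega : j < a + j + 1) hP (fun b hb => hA b (by omega)) hk hN)
  have h₁ := hgrowth m 1
  have h₂ := hgrowth m (L + 1)
  rw [div_mul_eq_mul_div, le_div_iff₀ hσ]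
  push_cast
  rw [add_comm m 1, show L + (1 + m) = L + 1 + m by ring]
  linarith

/-- Main theorem: let `β > 1` be a Parry number, with quasi-greedy expansion
`d*_β(1) = t(0)t(1)⋯` (so `1 = Σ_j t(j)β^{-(j+1)}`, all tails positive and bounded,
`t` ultimately periodic) and canonical Parry–Bertrand numeration system `U_β`
(`U(0)=1`, `U(n) = t(0)U(n-1)+⋯+t(n-1)U(0)+1`) with language `L_β` (admissible words
with nonzero leading digit). For every binary `U_β`-automatic sequence `s`, i.e.
`s(n) = τ(δ*(r0, rep(n)))` for a DFAO with finite state set `R`, and every `k ≥ 1`,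
there is a constant `c > 0` with `C_{2k}(s,N) ≥ c·N` for all sufficiently large `N`. -/
theorem stmt17 (β : ℝ) (hβ : 1 < β) (t : ℕ → ℕ)
    (hdig : ∀ j, (t j : ℝ) < β)
    (hsum : ∑' j : ℕ, (t j : ℝ) * β⁻¹ ^ (j + 1) = 1)
    (htail_pos : ∀ m : ℕ, 0 < ∑' j : ℕ, (t (m + j) : ℝ) * β⁻¹ ^ (j + 1))
    (htail_le : ∀ m : ℕ, ∑' j : ℕ, (t (m + j) : ℝ) * β⁻¹ ^ (j + 1) ≤ 1)
    (hParry : ∃ m p : ℕ, 0 < p ∧ ∀ j ≥ m, t (j + p) = t j)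
    (U : ℕ → ℕ) (hU0 : U 0 = 1)
    (hUrec : ∀ n, U (n + 1) = 1 + ∑ i ∈ Finset.range (n + 1), t i * U (n - i))
    (repU : ℕ → List ℕ)
    (hrep_val : ∀ n, wval U (repU n) = n)
    (hrep_adm : ∀ n, Adm t (repU n))
    (hrep_lead : ∀ n c w, repU n = c :: w → c ≠ 0)
    {R : Type*} [Fintype R] (δ : R → ℕ → R) (r0 : R) (τ : R → ℕ) (hτ : ∀ r, τ r ≤ 1)
    (s : ℕ → ℕ) (hs : ∀ n, s n = τ (List.foldl δ r0 (repU n)))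
    (k : ℕ) (hk : 1 ≤ k) :
    ∃ c : ℝ, 0 < c ∧ ∃ N₀ : ℕ, ∀ N ≥ N₀, c * N ≤ (corrMeasure s (2 * k) N : ℝ) :=
  stmt17_general β hβ t hdig hsum htail_pos htail_le hParry U hU0 hUrec repU hrep_val hrep_adm
    hrep_lead δ r0 τ s hs k hk
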